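/- Let F : D → ℝ be a warping function whose weight w = (F⁻¹)′ satisfies w(x+y) ≤ C·w(x)·w(y) for all x,y ∈ ℝ with C ≥ 1, let 1 ≤ p ≤ ∞ and X = L^p_w(ℝ). Let δ > 0. If f ∈ X has support contained in [−δ,δ] and 0 ≤ ε ≤ 1/(2Cδw(δ)), then for every y ∈ ℝ: ‖f − E_{y,ε}f‖_X ≤ √(2 − 2·cos(2πε·C·δ·w(δ))) · ‖f‖_X. -/

import Mathlib

open MeasureTheory Filter Topology Set
open scoped ENNReal NNReal

noncomputable section

/-- A warping function `F : D → ℝ` (with `D = ℝ` or `D = (0,∞)`), bundled together with its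
inverse `Finv`, its derivative `F'` and the associated weight `w = (F⁻¹)'`.  The fields record:
bijectivity of `F : D → ℝ`, `F ∈ C¹(D)` with `F' > 0`, strict decrease of `F'` in `|t|`,
`w = (F⁻¹)'`, oddness of `F` when `D = ℝ`, and `v`-moderateness of `w` for some
submultiplicative weight `v`. -/
structure Warping where
  D : Set ℝ
  F : ℝ → ℝ
  Finv : ℝ → ℝ
  F' : ℝ → ℝ
  w : ℝ → ℝ
  hD : D = Set.univ ∨ D = Set.Ioi 0
  left_inv : ∀ x ∈ D, Finv (F x) = x
  mem_inv : ∀ s : ℝ, Finv s ∈ D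
  right_inv : ∀ s : ℝ, F (Finv s) = s
  F_hasDeriv : ∀ t ∈ D, HasDerivAt F (F' t) t
  F'_cont : ContinuousOn F' D
  F'_pos : ∀ t ∈ D, 0 < F' t
  F'_dec : ∀ t₀ ∈ D, ∀ t₁ ∈ D, |t₀| < |t₁| → F' t₁ < F' t₀
  w_hasDeriv : ∀ s : ℝ, HasDerivAt Finv (w s) s
  w_pos : ∀ s : ℝ, 0 < w s
  odd_of_univ : D = Set.univ → ∀ t, F (-t) = -F t
  moderate : ∃ (v : ℝ → ℝ) (C₀ : ℝ), (∀ x, 0 < v x) ∧ (∀ x y, v (x + y) ≤ v x * v y) ∧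
      ∀ x y, w (x + y) ≤ C₀ * v x * w y

/-- The frequency-side warped atom `g_x = √(F'(x)) · (T_{F(x)}θ) ∘ F` on `D`, extended by zero. -/
def gxFun (W : Warping) (θ : ℝ → ℂ) (x : ℝ) : ℝ → ℂ :=
  W.D.indicator fun t => (Real.sqrt (W.F' x) : ℂ) * θ (W.F t - W.F x)

/-- The Fourier transform of the warped time-frequency atom `g_{x,ξ} = T_ξ (ǧ_x)`:
`ĝ_{x,ξ}(t) = e^{-2πiξt} g_x(t)`. -/
def hatAtom (W : Warping) (θ : ℝ → ℂ) (x ξ : ℝ) : ℝ → ℂ := fun t =>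
  gxFun W θ x t * Complex.exp (-(2 * Real.pi * Complex.I * ξ * t))

/-- The warped time-frequency transform `V_{θ,F} f (x,ξ) = ⟨f, g_{x,ξ}⟩`, expressed on the
Fourier side (via Plancherel) in terms of `fh = f̂`:
`V_{θ,F} f (x,ξ) = ∫ f̂(t) conj(g_x(t)) e^{2πiξt} dt`. -/
def warpedTransform (W : Warping) (θ fh : ℝ → ℂ) (x ξ : ℝ) : ℂ :=
  ∫ t : ℝ, fh t * (starRingEnd ℂ) (gxFun W θ x t) * Complex.exp (2 * Real.pi * Complex.I * ξ * t)

/-- The operator `E_{y,ε}`: `(E_{y,ε}f)(t) = f(t) e^{2πiε(F⁻¹(t+y)−F⁻¹(y))/w(y)}`. -/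
def Eop (W : Warping) (y ε : ℝ) (f : ℝ → ℂ) : ℝ → ℂ := fun t =>
  f t * Complex.exp (2 * Real.pi * Complex.I * ε *
    (((W.Finv (t + y) - W.Finv y) / W.w y : ℝ) : ℂ))

/-! Since `E_{y,ε}` multiplies `f` by a unimodular phase `e^{iφ(t)}`, pointwise
`|f − E_{y,ε}f| = |f|·|1 − e^{iφ}| = |f|·√(2 − 2cos φ)`. For `|t| ≤ δ` the mean value theorem,
together with `w(c) ≤ C w(c − y) w(y) ≤ C w(δ) w(y)` (`w = 1/F'∘F⁻¹` grows with `|·|`), gives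
`|φ(t)| ≤ 2πεCδw(δ) ≤ π`, and `2 − 2cos` is increasing on `[0, π]`. -/

namespace Warping

variable (W : Warping)

lemma finv_strictMono : StrictMono W.Finv :=
  strictMono_of_deriv_pos fun s => (W.w_hasDeriv s).deriv ▸ W.w_pos s

lemma F'_finv_mul_w (s : ℝ) : W.F' (W.Finv s) * W.w s = 1 := by
  have hcomp : HasDerivAt (W.F ∘ W.Finv) (W.F' (W.Finv s) * W.w s) s :=
    (W.F_hasDeriv _ (W.mem_inv s)).comp s (W.w_hasDeriv s)
  have hid : W.F ∘ W.Finv = id := funext W.right_inv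
  rw [hid] at hcomp
  exact hcomp.unique (hasDerivAt_id s)

lemma w_lt_of_abs_finv_lt {a b : ℝ} (h : |W.Finv a| < |W.Finv b|) : W.w a < W.w b := by
  have hF' := W.F'_dec _ (W.mem_inv a) _ (W.mem_inv b) h
  have ha := W.F'_finv_mul_w a
  have hb := W.F'_finv_mul_w b
  nlinarith [W.F'_pos _ (W.mem_inv b), W.w_pos a, W.w_pos b]

lemma finv_neg (hU : W.D = univ) (s : ℝ) : W.Finv (-s) = -W.Finv s := by
  have h := W.left_inv (-W.Finv s) (hU ▸ mem_univ _)
  rwa [W.odd_of_univ hU, W.right_inv] at h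

lemma w_abs (hU : W.D = univ) (s : ℝ) : W.w |s| = W.w s := by
  have hneg : HasDerivAt (fun t => W.Finv (-t)) (W.w (-s) * -1) s :=
    (W.w_hasDeriv (-s)).comp s (hasDerivAt_neg s)
  have hodd : (fun t => W.Finv (-t)) = fun t => -W.Finv t := funext (W.finv_neg hU)
  rw [hodd] at hneg
  have hw : W.w (-s) = W.w s := by linarith [hneg.unique (W.w_hasDeriv s).neg]
  rcases abs_choice s with h | h <;> rw [h]
  exact hw

lemma w_le_of_abs_le {a b : ℝ} (h : |a| ≤ b) : W.w a ≤ W.w b := by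
  rcases W.hD with hU | hI
  · rw [← W.w_abs hU a]
    rcases h.eq_or_lt with rfl | hlt
    · exact le_rfl
    have hfinv0 : W.Finv 0 = 0 := by linarith [neg_zero (G := ℝ) ▸ W.finv_neg hU 0]
    have h0 : 0 ≤ W.Finv |a| := hfinv0 ▸ W.finv_strictMono.monotone (abs_nonneg a)
    refine (W.w_lt_of_abs_finv_lt ?_).le
    rw [abs_of_nonneg h0, abs_of_nonneg (h0.trans (W.finv_strictMono hlt).le)]
    exact W.finv_strictMono hlt
  · rcases ((le_abs_self a).trans h).eq_or_lt with rfl | hlt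
    · exact le_rfl
    have hpos : ∀ s, 0 < W.Finv s := fun s => mem_Ioi.1 (hI ▸ W.mem_inv s)
    refine (W.w_lt_of_abs_finv_lt ?_).le
    rw [abs_of_pos (hpos a), abs_of_pos (hpos b)]
    exact W.finv_strictMono hlt

variable {W}

lemma w_le_of_abs_sub_le {C : ℝ} (hC : 0 ≤ C)
    (hwsub : ∀ x y : ℝ, W.w (x + y) ≤ C * W.w x * W.w y) {c y δ : ℝ} (h : |c - y| ≤ δ) : W.w c ≤ C * W.w δ * W.w y :=
  calc W.w c = W.w ((c - y) + y) := by rw [sub_add_cancel]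
    _ ≤ C * W.w (c - y) * W.w y := hwsub _ _
    _ ≤ C * W.w δ * W.w y := by gcongr; exacts [(W.w_pos y).le, W.w_le_of_abs_le h]

lemma abs_finv_add_sub_le {C : ℝ} (hC : 0 ≤ C)
    (hwsub : ∀ x y : ℝ, W.w (x + y) ≤ C * W.w x * W.w y) {t y δ : ℝ} (ht : |t| ≤ δ) :
    |W.Finv (t + y) - W.Finv y| ≤ C * δ * W.w δ * W.w y := by
  have hbound : ∀ x ∈ Icc (y - δ) (y + δ), ‖W.w x‖ ≤ C * W.w δ * W.w y := fun x hx => by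
    rw [Real.norm_of_nonneg (W.w_pos x).le]
    exact w_le_of_abs_sub_le hC hwsub (abs_sub_le_iff.2 ⟨by linarith [hx.2], by linarith [hx.1]⟩)
  have hδ : 0 ≤ δ := (abs_nonneg t).trans ht
  have hmvt := Convex.norm_image_sub_le_of_norm_hasDerivWithin_le
    (fun x _ => (W.w_hasDeriv x).hasDerivWithinAt) hbound (convex_Icc _ _)
    (⟨by linarith, by linarith⟩ : y ∈ Icc (y - δ) (y + δ))
    (⟨by linarith [neg_abs_le t], by linarith [le_abs_self t]⟩ : t + y ∈ Icc (y - δ) (y + δ))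
  rw [add_sub_cancel_right, Real.norm_eq_abs, Real.norm_eq_abs] at hmvt
  calc _ ≤ C * W.w δ * W.w y * |t| := hmvt
    _ ≤ C * W.w δ * W.w y * δ := by have := W.w_pos δ; have := W.w_pos y; gcongr
    _ = C * δ * W.w δ * W.w y := by ring

end Warping

lemma norm_one_sub_exp_mul_I (θ : ℝ) :
    ‖1 - Complex.exp (θ * Complex.I)‖ = Real.sqrt (2 - 2 * Real.cos θ) := by
  rw [Complex.exp_mul_I, ← Complex.ofReal_cos, ← Complex.ofReal_sin,
    show (1 : ℂ) - (Real.cos θ + Real.sin θ * Complex.I)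
      = ((1 - Real.cos θ : ℝ) : ℂ) + ((-Real.sin θ : ℝ) : ℂ) * Complex.I by push_cast; ring,
    Complex.norm_add_mul_I]
  congr 1
  nlinarith [Real.sin_sq_add_cos_sq θ]

lemma norm_one_sub_exp_mul_I_le {θ B : ℝ} (hθ : |θ| ≤ B) (hB : B ≤ Real.pi) :
    ‖1 - Complex.exp (θ * Complex.I)‖ ≤ Real.sqrt (2 - 2 * Real.cos B) := by
  rw [norm_one_sub_exp_mul_I, ← Real.cos_abs θ]
  gcongr
  exact Real.cos_le_cos_of_nonneg_of_le_pi (abs_nonneg θ) hB hθ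

lemma Eop_apply (W : Warping) (y ε : ℝ) (f : ℝ → ℂ) (t : ℝ) :
    Eop W y ε f t = f t * Complex.exp
      ((2 * Real.pi * ε * ((W.Finv (t + y) - W.Finv y) / W.w y) : ℝ) * Complex.I) := by
  simp only [Eop]
  push_cast
  ring_nf

lemma norm_sub_Eop_le {W : Warping} {C δ ε : ℝ} (hC : 0 ≤ C)
    (hwsub : ∀ x y : ℝ, W.w (x + y) ≤ C * W.w x * W.w y) (hε0 : 0 ≤ ε)
    (hπ : 2 * Real.pi * ε * C * δ * W.w δ ≤ Real.pi) (f : ℝ → ℂ) (y : ℝ) {t : ℝ}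
    (ht : |t| ≤ δ) :
    ‖f t - Eop W y ε f t‖ ≤
      Real.sqrt (2 - 2 * Real.cos (2 * Real.pi * ε * C * δ * W.w δ)) * ‖f t‖ := by
  have hphase : |2 * Real.pi * ε * ((W.Finv (t + y) - W.Finv y) / W.w y)|
      ≤ 2 * Real.pi * ε * C * δ * W.w δ := by
    have hwy := W.w_pos y
    rw [abs_mul, abs_of_nonneg (by positivity : 0 ≤ 2 * Real.pi * ε), abs_div,
      abs_of_pos hwy, mul_assoc _ C, mul_assoc _ (C * δ)]
    gcongr
    rw [div_le_iff₀ hwy]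
    exact Warping.abs_finv_add_sub_le hC hwsub ht
  rw [Eop_apply, ← mul_one_sub, norm_mul, mul_comm]
  gcongr
  exact norm_one_sub_exp_mul_I_le hphase hπ

theorem Eop_approx_identity_general
    (W : Warping) (C : ℝ) (hC : 1 ≤ C)
    (hwsub : ∀ x y : ℝ, W.w (x + y) ≤ C * W.w x * W.w y)
    (p : ℝ≥0∞)
    (δ : ℝ) (hδ : 0 < δ)
    (f : ℝ → ℂ)
    (hsupp : Function.support f ⊆ Set.Icc (-δ) δ)
    (ε : ℝ) (hε0 : 0 ≤ ε) (hε : ε ≤ 1 / (2 * C * δ * W.w δ)) (y : ℝ) :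
    eLpNorm (fun t : ℝ => W.w t • (f t - Eop W y ε f t)) p volume ≤
      ENNReal.ofReal (Real.sqrt (2 - 2 * Real.cos (2 * Real.pi * ε * C * δ * W.w δ))) *
        eLpNorm (fun t : ℝ => W.w t • f t) p volume := by
  have hC0 : 0 ≤ C := zero_le_one.trans hC
  have hπ : 2 * Real.pi * ε * C * δ * W.w δ ≤ Real.pi := by
    have hden : 0 < 2 * C * δ * W.w δ := by have := W.w_pos δ; positivity
    have := (le_div_iff₀ hden).1 hε
    nlinarith [Real.pi_pos]
  refine eLpNorm_le_mul_eLpNorm_of_ae_le_mul (Eventually.of_forall fun t => ?_) p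
  by_cases hft : f t = 0
  · simp [Eop, hft]
  rw [norm_smul, norm_smul, mul_left_comm]
  gcongr
  exact norm_sub_Eop_le hC0 hwsub hε0 hπ f y (abs_le.2 (hsupp hft))

/-- Let `F : D → ℝ` be a warping function whose weight `w = (F⁻¹)'` satisfies
`w(x+y) ≤ C w(x) w(y)` with `C ≥ 1`, let `1 ≤ p ≤ ∞` and `X = L^p_w(ℝ)`, `δ > 0`.  If
`f ∈ X` is supported in `[−δ,δ]` and `0 ≤ ε ≤ 1/(2Cδw(δ))`, then for every `y ∈ ℝ`:
`‖f − E_{y,ε}f‖_X ≤ √(2 − 2cos(2πεCδw(δ))) ‖f‖_X`. -/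
theorem Eop_approx_identity
    (W : Warping) (C : ℝ) (hC : 1 ≤ C)
    (hwsub : ∀ x y : ℝ, W.w (x + y) ≤ C * W.w x * W.w y)
    (p : ℝ≥0∞) (hp : 1 ≤ p)
    (δ : ℝ) (hδ : 0 < δ)
    (f : ℝ → ℂ) (hf : MemLp (fun t : ℝ => W.w t • f t) p volume)
    (hsupp : Function.support f ⊆ Set.Icc (-δ) δ)
    (ε : ℝ) (hε0 : 0 ≤ ε) (hε : ε ≤ 1 / (2 * C * δ * W.w δ)) (y : ℝ) :
    eLpNorm (fun t : ℝ => W.w t • (f t - Eop W y ε f t)) p volume ≤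
      ENNReal.ofReal (Real.sqrt (2 - 2 * Real.cos (2 * Real.pi * ε * C * δ * W.w δ))) *
        eLpNorm (fun t : ℝ => W.w t • f t) p volume :=
  Eop_approx_identity_general W C hC hwsub p δ hδ f hsupp ε hε0 hε y
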